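/- arXiv:2410.13811 — 2 statements merged into one kernel-verified Lean document; each statement's English description precedes it below -/
import Mathlib

section
/- Let G be a subgroup of (ℤ/2)⁵ (viewed as binary 5-tuples with coordinatewise addition, coordinates indexed cyclically) satisfying: (a) every coordinate projection G → ℤ/2 is surjective; (b) no nonzero element of G has exactly one coordinate equal to 1 and no nonzero element has exactly one coordinate equal to 0; (c) no two distinct nonzero elements φ, ψ of G satisfy |supp(φ) ∩ supp(ψ)| = 1, where supp denotes the set of coordinates equal to 1; (d) no element of G has exactly two cyclically adjacent 1's (including positions 5 and 1 counted as adjacent). Then (1,1,1,1,1) ∈ G, and G is, up to the action of the dihedral group D₅ permuting coordinates cyclically and by reflection, either ⟨(1,1,1,1,1)⟩ or ⟨(1,1,1,1,1), (1,0,1,0,0)⟩. -/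
/-- The support of a binary 5-tuple: the set of coordinates equal to `1`. -/
def supp (φ : Fin 5 → ZMod 2) : Finset (Fin 5) := Finset.univ.filter fun i => φ i = 1

/-- The dihedral group D₅ acting on the cyclically indexed coordinates:
the subgroup of permutations of `Fin 5` generated by the cyclic rotation
and the reflection `i ↦ -i`. -/
def dihedralD5 : Subgroup (Equiv.Perm (Fin 5)) :=
  Subgroup.closure {finRotate 5, Equiv.neg (Fin 5)}

/-!
Write `|φ|` for the weight `#(supp φ)`. Over `ℤ/2` the support of a sum is the symmetric difference of the
supports, so `|φ + ψ| = |φ| + |ψ| - 2 |φ ∩ ψ|` and `|φ ∩ (φ + ψ)| = |φ| - |φ ∩ ψ|`; by (b) every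
element other than `0` and `1` has weight 2 or 3.

If `1 ∉ G`, two distinct nonzero elements `φ, ψ` would give three nonzero elements `φ, ψ, φ + ψ`
of weight 2 or 3 whose pairwise intersections avoid size 1 by (c), and the two identities above
leave no room for this. So `G` has a single nonzero element, which cannot cover all coordinates
as (a) demands.

Once `1 ∈ G`, adding `1` complements supports, so every element other than `0, 1` is `d` or
`d + 1` for some `d ∈ G` of weight 2. Two distinct such `d` would meet in one coordinate,
contradicting (c), or be disjoint, giving an element of weight 4. Hence `G = ⟨1⟩` or
`G = ⟨1, d⟩`, and by (d) the support of `d` is a pair `{k, k + 2}`, which a rotation moves to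
`{0, 2}`.
-/

open Finset

namespace PentagonCode

variable {φ ψ : Fin 5 → ZMod 2}

lemma mem_supp {i : Fin 5} : i ∈ supp φ ↔ φ i = 1 := by
  simp [supp]

lemma supp_injective : Function.Injective supp := by
  intro φ ψ h
  funext i
  have hi : φ i = 1 ↔ ψ i = 1 := by rw [← mem_supp, ← mem_supp, h]
  generalize φ i = a, ψ i = b at hi
  revert a b
  decide

lemma supp_one : supp 1 = univ := by
  ext i
  simp [mem_supp]

lemma supp_eq_empty_iff : supp φ = ∅ ↔ φ = 0 :=
  supp_injective.eq_iff' (by decide)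

lemma filter_eq_zero_eq_compl_supp : univ.filter (fun i => φ i = 0) = (supp φ)ᶜ := by
  ext i
  simp only [mem_filter, mem_univ, true_and, mem_compl, mem_supp]
  generalize φ i = a
  revert a
  decide

lemma supp_add : supp (φ + ψ) = symmDiff (supp φ) (supp ψ) := by
  ext i
  simp only [Finset.mem_symmDiff, mem_supp, Pi.add_apply]
  generalize φ i = a, ψ i = b
  revert a b
  decide

lemma supp_add_one : supp (φ + 1) = (supp φ)ᶜ := by
  ext i
  simp only [mem_compl, mem_supp, Pi.add_apply, Pi.one_apply]
  generalize φ i = a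
  revert a
  decide

lemma card_supp_add :
    #(supp (φ + ψ)) + 2 * #(supp φ ∩ supp ψ) = #(supp φ) + #(supp ψ) := by
  rw [supp_add, symmDiff_eq_sup_sdiff_inf, sup_eq_union, inf_eq_inter,
    card_sdiff_of_subset (inter_subset_union), ← card_union_add_card_inter]
  have := card_le_card (inter_subset_union (s := supp φ) (t := supp ψ))
  omega

lemma supp_inter_supp_add : supp φ ∩ supp (φ + ψ) = supp φ \ supp ψ := by
  ext i
  simp only [mem_inter, mem_sdiff, mem_supp, Pi.add_apply]
  generalize φ i = a, ψ i = b
  revert a b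
  decide

lemma card_supp_inter_supp_add :
    #(supp φ ∩ supp (φ + ψ)) + #(supp φ ∩ supp ψ) = #(supp φ) := by
  rw [supp_inter_supp_add]
  exact card_sdiff_add_card_inter _ _

lemma card_supp_eq_two_or_three (h0 : φ ≠ 0) (h1 : φ ≠ 1)
    (hw : #(supp φ) ≠ 1 ∧ #(univ.filter fun i => φ i = 0) ≠ 1) :
    #(supp φ) = 2 ∨ #(supp φ) = 3 := by
  have hne : #(supp φ) ≠ 0 := fun h => h0 (supp_eq_empty_iff.mp (card_eq_zero.mp h))
  have hle : #(supp φ) ≤ 5 := card_le_univ _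
  have hne5 : #(supp φ) ≠ 5 := fun h =>
    h1 (supp_injective (by rw [supp_one]; exact eq_univ_of_card _ h))
  have hzeros := hw.2
  rw [filter_eq_zero_eq_compl_supp, card_compl, Fintype.card_fin] at hzeros
  omega

def skipPair (k : Fin 5) : Fin 5 → ZMod 2 := fun i => if i = k ∨ i = k + 2 then 1 else 0

lemma exists_eq_skipPair :
    ∀ φ : Fin 5 → ZMod 2, #(supp φ) = 2 → (∀ i, supp φ ≠ {i, i + 1}) → ∃ k, φ = skipPair k := by
  decide

lemma skipPair_comp_rotate :
    ∀ k : Fin 5, skipPair k ∘ ⇑(finRotate 5 ^ (k : ℕ)) = ![1, 0, 1, 0, 0] := by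
  decide

lemma comp_mem_closure_image_iff {ι M : Type*} [AddGroup M] (σ : Equiv.Perm ι)
    (s : Set (ι → M)) (f : ι → M) :
    f ∘ σ ∈ AddSubgroup.closure ((· ∘ σ) '' s) ↔ f ∈ AddSubgroup.closure s := by
  let compσ : (ι → M) →+ (ι → M) :=
    { toFun := (· ∘ σ), map_zero' := rfl, map_add' := fun _ _ => rfl }
  change compσ f ∈ AddSubgroup.closure (compσ '' s) ↔ _
  rw [← AddMonoidHom.map_closure, AddSubgroup.mem_map_iff_mem σ.surjective.injective_comp_right]

def NoWeightOneOrFour (G : AddSubgroup (Fin 5 → ZMod 2)) : Prop :=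
  ∀ φ ∈ G, φ ≠ 0 → #(supp φ) ≠ 1 ∧ #(univ.filter fun i => φ i = 0) ≠ 1

def NoSingletonMeet (G : AddSubgroup (Fin 5 → ZMod 2)) : Prop :=
  ∀ φ ∈ G, ∀ ψ ∈ G, φ ≠ 0 → ψ ≠ 0 → φ ≠ ψ → #(supp φ ∩ supp ψ) ≠ 1

variable {G : AddSubgroup (Fin 5 → ZMod 2)}

lemma eq_of_one_notMem (hb : NoWeightOneOrFour G) (hc : NoSingletonMeet G) (h1 : 1 ∉ G)
    (hφ : φ ∈ G) (hψ : ψ ∈ G) (hφ0 : φ ≠ 0) (hψ0 : ψ ≠ 0) : φ = ψ := by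
  by_contra hne
  have hχ : φ + ψ ∈ G := add_mem hφ hψ
  have hχ0 : φ + ψ ≠ 0 := fun h => hne (CharTwo.add_eq_zero.mp h)
  have hφχ : φ ≠ φ + ψ := fun h => hψ0 (by simpa using h)
  have hψχ : ψ ≠ φ + ψ := fun h => hφ0 (by simpa using h)
  have weight {θ} (hθ : θ ∈ G) (hθ0 : θ ≠ 0) := card_supp_eq_two_or_three hθ0
    (fun h => h1 (h ▸ hθ)) (hb θ hθ hθ0)
  have hφψ := hc φ hφ ψ hψ hφ0 hψ0 hne
  have hφχ' := hc φ hφ _ hχ hφ0 hχ0 hφχ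
  have hψχ' := hc ψ hψ _ hχ hψ0 hχ0 hψχ
  have hχ' := card_supp_add (φ := φ) (ψ := ψ)
  have hφ' := card_supp_inter_supp_add (φ := φ) (ψ := ψ)
  have hψ' : #(supp ψ ∩ supp (φ + ψ)) + #(supp φ ∩ supp ψ) = #(supp ψ) := by
    rw [add_comm φ, inter_comm (supp φ)]
    exact card_supp_inter_supp_add
  have := weight hφ hφ0
  have := weight hψ hψ0
  have := weight hχ hχ0
  omega

lemma one_mem_of_coord_surjective (ha : ∀ e : Fin 5, ∀ z : ZMod 2, ∃ φ ∈ G, φ e = z)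
    (hb : NoWeightOneOrFour G) (hc : NoSingletonMeet G) : 1 ∈ G := by
  by_contra h1
  obtain ⟨φ, hφ, hφ0⟩ := ha 0 1
  obtain ⟨j, hj⟩ := Function.ne_iff.mp fun h : φ = 1 => h1 (h ▸ hφ)
  obtain ⟨ψ, hψ, hψj⟩ := ha j 1
  have ne_zero {θ : Fin 5 → ZMod 2} (i : Fin 5) (hθ : θ i = 1) : θ ≠ 0 := by
    rintro rfl
    simp at hθ
  have hφψ := eq_of_one_notMem hb hc h1 hφ hψ (ne_zero 0 hφ0) (ne_zero j hψj)
  exact hj (by rw [hφψ]; exact hψj)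

lemma eq_of_card_supp_eq_two (hb : NoWeightOneOrFour G) (hc : NoSingletonMeet G)
    (hφ : φ ∈ G) (hψ : ψ ∈ G) (hφ2 : #(supp φ) = 2) (hψ2 : #(supp ψ) = 2) : φ = ψ := by
  by_contra hne
  have ne_zero {θ} (hθ : #(supp θ) = 2) : θ ≠ 0 := by rintro rfl; simp [supp] at hθ
  have hmeet := hc φ hφ ψ hψ (ne_zero hφ2) (ne_zero hψ2) hne
  have hle := card_le_card (inter_subset_left (s₁ := supp φ) (s₂ := supp ψ))
  have hne2 : #(supp φ ∩ supp ψ) ≠ 2 := fun h => hne <| supp_injective <|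
    (inter_eq_left.mp (eq_of_subset_of_card_le inter_subset_left (by omega))).antisymm
      (inter_eq_right.mp (eq_of_subset_of_card_le inter_subset_right (by omega)))
  have hχ0 : φ + ψ ≠ 0 := fun h => hne (CharTwo.add_eq_zero.mp h)
  have hzeros := (hb _ (add_mem hφ hψ) hχ0).2
  rw [filter_eq_zero_eq_compl_supp, card_compl, Fintype.card_fin] at hzeros
  have := card_supp_add (φ := φ) (ψ := ψ)
  omega

lemma exists_card_supp_eq_two (hb : NoWeightOneOrFour G) (h1 : 1 ∈ G) (hφ : φ ∈ G)
    (hφ0 : φ ≠ 0) (hφ1 : φ ≠ 1) : ∃ d ∈ G, #(supp d) = 2 ∧ (φ = d ∨ φ = d + 1) := by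
  rcases card_supp_eq_two_or_three hφ0 hφ1 (hb φ hφ hφ0) with h | h
  · exact ⟨φ, hφ, h, Or.inl rfl⟩
  · refine ⟨φ + 1, add_mem hφ h1, ?_, Or.inr (by simp [CharTwo.add_cancel_right])⟩
    rw [supp_add_one, card_compl, Fintype.card_fin, h]

lemma eq_closure_one (hb : NoWeightOneOrFour G) (h1 : 1 ∈ G)
    (hD : ∀ d ∈ G, #(supp d) ≠ 2) : G = AddSubgroup.closure {1} := by
  refine le_antisymm (fun φ hφ => ?_) ((AddSubgroup.closure_le G).mpr (by simpa using h1))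
  by_cases hφ0 : φ = 0
  · exact hφ0 ▸ zero_mem _
  by_cases hφ1 : φ = 1
  · exact hφ1 ▸ AddSubgroup.subset_closure rfl
  obtain ⟨d, hd, hd2, -⟩ := exists_card_supp_eq_two hb h1 hφ hφ0 hφ1
  exact absurd hd2 (hD d hd)

lemma eq_closure_pair (hb : NoWeightOneOrFour G) (hc : NoSingletonMeet G) (h1 : 1 ∈ G)
    {d : Fin 5 → ZMod 2} (hd : d ∈ G) (hd2 : #(supp d) = 2) :
    G = AddSubgroup.closure {1, d} := by
  refine le_antisymm (fun φ hφ => ?_)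
    ((AddSubgroup.closure_le G).mpr (Set.insert_subset h1 (Set.singleton_subset_iff.mpr hd)))
  have h1mem : (1 : Fin 5 → ZMod 2) ∈ AddSubgroup.closure {1, d} :=
    AddSubgroup.subset_closure (Set.mem_insert _ _)
  have hdmem : d ∈ AddSubgroup.closure {1, d} :=
    AddSubgroup.subset_closure (Set.mem_insert_of_mem _ rfl)
  by_cases hφ0 : φ = 0
  · exact hφ0 ▸ zero_mem _
  by_cases hφ1 : φ = 1
  · exact hφ1 ▸ h1mem
  obtain ⟨d', hd', hd'2, hφd'⟩ := exists_card_supp_eq_two hb h1 hφ hφ0 hφ1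
  obtain rfl := eq_of_card_supp_eq_two hb hc hd' hd hd'2 hd2
  rcases hφd' with rfl | rfl
  · exact hdmem
  · exact add_mem hdmem h1mem

end PentagonCode

open PentagonCode in
theorem stmt_4 (G : AddSubgroup (Fin 5 → ZMod 2))
    -- (a) every coordinate projection is surjective
    (ha : ∀ e : Fin 5, ∀ z : ZMod 2, ∃ φ ∈ G, φ e = z)
    -- (b) no nonzero element has exactly one coordinate 1, and none has
    -- exactly one coordinate 0
    (hb : ∀ φ ∈ G, φ ≠ 0 →
      (supp φ).card ≠ 1 ∧ (Finset.univ.filter fun i => φ i = 0).card ≠ 1)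
    -- (c) no two distinct nonzero elements have supports meeting in exactly
    -- one coordinate
    (hc : ∀ φ ∈ G, ∀ ψ ∈ G, φ ≠ 0 → ψ ≠ 0 → φ ≠ ψ →
      (supp φ ∩ supp ψ).card ≠ 1)
    -- (d) no element has support exactly two cyclically adjacent coordinates
    (hd : ∀ φ ∈ G, ∀ i : Fin 5, supp φ ≠ {i, i + 1}) :
    (fun _ => 1 : Fin 5 → ZMod 2) ∈ G ∧
    ∃ σ ∈ dihedralD5,
      (∀ φ : Fin 5 → ZMod 2, φ ∈ G ↔
        φ ∘ σ ∈ AddSubgroup.closure {(fun _ => 1 : Fin 5 → ZMod 2)}) ∨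
      (∀ φ : Fin 5 → ZMod 2, φ ∈ G ↔
        φ ∘ σ ∈ AddSubgroup.closure
          {(fun _ => 1 : Fin 5 → ZMod 2), ![1, 0, 1, 0, 0]}) := by
  have h1 : (1 : Fin 5 → ZMod 2) ∈ G := one_mem_of_coord_surjective ha hb hc
  refine ⟨h1, ?_⟩
  by_cases hD : ∃ d ∈ G, #(supp d) = 2
  · obtain ⟨d, hdG, hd2⟩ := hD
    obtain ⟨k, rfl⟩ := exists_eq_skipPair d hd2 (hd d hdG)
    refine ⟨finRotate 5 ^ (k : ℕ), pow_mem (Subgroup.subset_closure (Set.mem_insert _ _)) _,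
      Or.inr fun φ => ?_⟩
    rw [eq_closure_pair hb hc h1 hdG hd2, ← skipPair_comp_rotate k, ← comp_mem_closure_image_iff,
      Set.image_pair]
    rfl
  · push Not at hD
    refine ⟨1, one_mem _, Or.inl fun φ => ?_⟩
    rw [eq_closure_one hb h1 hD]
    rfl
end

section
/- Let G be a subgroup of (ℤ/2)⁵ such that every coordinate projection G → ℤ/2 is surjective, no nonzero element of G has Hamming weight 1 or 4, and no two elements of G have supports intersecting in exactly one coordinate. Then the all-ones vector (1,1,1,1,1) belongs to G. -/
open Finset
open scoped symmDiff

namespace Finset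

variable {α : Type*} [DecidableEq α]

theorem card_symmDiff_add_two_mul_card_inter (s t : Finset α) :
    #(s ∆ t) + 2 * #(s ∩ t) = #s + #t := by
  rw [symmDiff_eq_sup_sdiff_inf, sup_eq_union, inf_eq_inter,
    card_sdiff_of_subset inter_subset_union]
  have := card_union_add_card_inter s t
  have := card_le_card (inter_subset_union (s := s) (t := t))
  omega

theorem symmDiff_inter_eq_sdiff (s t : Finset α) : s ∆ t ∩ s = s \ t := by
  ext
  simp only [mem_inter, mem_symmDiff, mem_sdiff]
  tauto

end Finset

lemma supp_add (φ ψ : Fin 5 → ZMod 2) : supp (φ + ψ) = supp φ ∆ supp ψ := by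
  ext i
  simp only [supp, mem_symmDiff, mem_filter, mem_univ, true_and, Pi.add_apply]
  generalize φ i = a
  generalize ψ i = b
  revert a b
  decide

lemma ne_zero_of_supp_nonempty {φ : Fin 5 → ZMod 2} (h : (supp φ).Nonempty) : φ ≠ 0 := by
  rintro rfl
  simp [supp] at h

lemma eq_one_of_card_supp_eq_five {φ : Fin 5 → ZMod 2} (h : #(supp φ) = 5) :
    φ = fun _ => 1 := by
  funext i
  have hi : i ∈ supp φ := eq_univ_of_card _ h ▸ mem_univ i
  simpa [supp] using hi

lemma card_supp_eq_five_of_forall_card_supp_le (G : AddSubgroup (Fin 5 → ZMod 2))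
    (hsurj : ∀ e : Fin 5, ∀ z : ZMod 2, ∃ φ ∈ G, φ e = z)
    (hwt : ∀ φ ∈ G, φ ≠ 0 → #(supp φ) ≠ 1 ∧ #(supp φ) ≠ 4)
    (hint : ∀ φ ∈ G, ∀ ψ ∈ G, #(supp φ ∩ supp ψ) ≠ 1)
    {φ : Fin 5 → ZMod 2} (hφG : φ ∈ G) (hmax : ∀ ψ ∈ G, #(supp ψ) ≤ #(supp φ)) :
    #(supp φ) = 5 := by
  by_contra hne
  obtain ⟨e, he⟩ : ∃ e, e ∉ supp φ := by
    by_contra! h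
    exact hne (by simpa using congrArg card (eq_univ_of_forall h))
  obtain ⟨ψ, hψG, hψe⟩ := hsurj e 1
  have heψ : e ∈ supp ψ := by simp [supp, hψe]
  have hψφ : #(supp ψ) ≤ #(supp φ) := hmax ψ hψG
  have hψ_pos : 0 < #(supp ψ) := card_pos.mpr ⟨e, heψ⟩
  have hφ := hwt φ hφG (ne_zero_of_supp_nonempty (card_pos.mp (hψ_pos.trans_le hψφ)))
  have hψ := hwt ψ hψG (ne_zero_of_supp_nonempty ⟨e, heψ⟩)
  have hφ_le : #(supp φ) ≤ 5 := card_le_univ (supp φ)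
  have hinter_lt : #(supp φ ∩ supp ψ) < #(supp ψ) :=
    card_lt_card ⟨inter_subset_right, fun h => he (mem_of_mem_inter_left (h heψ))⟩
  have hinter := hint φ hφG ψ hψG
  have hsum_le := hmax _ (G.add_mem hφG hψG)
  have hsum_inter := hint _ (G.add_mem hφG hψG) φ hφG
  rw [supp_add] at hsum_le hsum_inter
  rw [symmDiff_inter_eq_sdiff] at hsum_inter
  have := card_symmDiff_add_two_mul_card_inter (supp φ) (supp ψ)
  have := card_sdiff_add_card_inter (supp φ) (supp ψ)
  omega

theorem stmt_5 (G : AddSubgroup (Fin 5 → ZMod 2))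
    -- every coordinate projection is surjective
    (hsurj : ∀ e : Fin 5, ∀ z : ZMod 2, ∃ φ ∈ G, φ e = z)
    -- no nonzero element has Hamming weight 1 or 4
    (hwt : ∀ φ ∈ G, φ ≠ 0 → (supp φ).card ≠ 1 ∧ (supp φ).card ≠ 4)
    -- no two elements have supports intersecting in exactly one coordinate
    (hint : ∀ φ ∈ G, ∀ ψ ∈ G, (supp φ ∩ supp ψ).card ≠ 1) :
    (fun _ => 1 : Fin 5 → ZMod 2) ∈ G := by
  obtain ⟨φ, hφG, hmax⟩ := Set.exists_max_image (G : Set (Fin 5 → ZMod 2)) (fun φ => #(supp φ))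
    (Set.toFinite _) ⟨0, G.zero_mem⟩
  rwa [← eq_one_of_card_supp_eq_five
    (card_supp_eq_five_of_forall_card_supp_le G hsurj hwt hint hφG hmax)]
end
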